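/- arXiv:2212.05233 — 3 statements merged into one kernel-verified Lean document; each statement's English description precedes it below -/
import Mathlib

section
/- The second moment of the number of open root-to-leaf paths satisfies E(Θ_n^2) = E(Θ_n) + Σ_{k=1}^{n} (N-1) N^{n+k-1} p^{n+k+1}. -/
/-!
Write `Θₙ = ∑_ℓ 1_{A_ℓ}`, where `A_ℓ` is the event that the path to the leaf `ℓ` is open. Then
`E(Θₙ²) = ∑_{ℓ,ℓ'} P(A_ℓ ∩ A_ℓ')`, and by independence `P(A_ℓ ∩ A_ℓ') = p ^ |path ℓ ∪ path ℓ'|`.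
Two paths whose last common vertex is at level `n - k` have `n + 1 + k` vertices together, and
for a fixed `ℓ` there are `N ^ k - N ^ (k - 1)` leaves `ℓ'` at that `k`, namely those below the
ancestor of `ℓ` at level `n - k` but not below the one at level `n - k + 1`. The diagonal
`ℓ = ℓ'` (`k = 0`) contributes `E(Θₙ)`.
-/

open MeasureTheory ProbabilityTheory Finset
open scoped Classical

section SecondMoment

variable {Ω ι : Type*} [Fintype ι]

lemma natCast_card_filter_eq_sum_indicator (A : ι → Set Ω) [∀ ω, DecidablePred (ω ∈ A ·)]
    (ω : Ω) : (#{i | ω ∈ A i} : ℝ) = ∑ i, (A i).indicator 1 ω := by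
  simp only [natCast_card_filter, Set.indicator_apply, Pi.one_apply]

variable [MeasurableSpace Ω] {μ : Measure Ω} [IsFiniteMeasure μ]

lemma integral_card_filter_mem (A : ι → Set Ω) [∀ ω, DecidablePred (ω ∈ A ·)]
    (hA : ∀ i, MeasurableSet (A i)) :
    ∫ ω, (#{i | ω ∈ A i} : ℝ) ∂μ = ∑ i, μ.real (A i) := by
  simp_rw [natCast_card_filter_eq_sum_indicator]
  rw [integral_finsetSum _ fun i _ => (integrable_const 1).indicator (hA i)]
  exact sum_congr rfl fun i _ => integral_indicator_one (hA i)

lemma integral_card_filter_mem_sq (A : ι → Set Ω) [∀ ω, DecidablePred (ω ∈ A ·)]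
    (hA : ∀ i, MeasurableSet (A i)) :
    ∫ ω, (#{i | ω ∈ A i} : ℝ) ^ 2 ∂μ = ∑ i, ∑ j, μ.real (A i ∩ A j) := by
  have hAA : ∀ i j, MeasurableSet (A i ∩ A j) := fun i j => (hA i).inter (hA j)
  have hsq : ∀ ω, (#{i | ω ∈ A i} : ℝ) ^ 2 = ∑ i, ∑ j, (A i ∩ A j).indicator 1 ω := by
    intro ω
    simp only [natCast_card_filter_eq_sum_indicator, sq, sum_mul_sum, Set.inter_indicator_one,
      Pi.mul_apply]
  simp_rw [hsq]
  rw [integral_finsetSum _ fun i _ => integrable_finsetSum _ fun j _ =>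
    (integrable_const 1).indicator (hAA i j)]
  refine sum_congr rfl fun i _ => ?_
  rw [integral_finsetSum _ fun j _ => (integrable_const 1).indicator (hAA i j)]
  exact sum_congr rfl fun j _ => integral_indicator_one (hAA i j)

end SecondMoment

section Bernoulli

variable {Ω ι : Type*} {X : ι → Ω → Bool}

lemma setOf_forall_mem_eq_true (T : Finset ι) :
    {ω | ∀ i ∈ T, X i ω = true} = ⋂ i ∈ T, X i ⁻¹' {true} := by
  ext; simp

variable [MeasurableSpace Ω]

lemma measurableSet_setOf_forall_mem_eq_true (hX : ∀ i, Measurable (X i)) (T : Finset ι) :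
    MeasurableSet {ω | ∀ i ∈ T, X i ω = true} := by
  rw [setOf_forall_mem_eq_true]
  exact .biInter T.countable_toSet fun i _ => hX i (measurableSet_singleton _)

lemma measureReal_setOf_forall_mem_eq_true {μ : Measure Ω} (hX : iIndepFun X μ) {p : ℝ}
    (hp : 0 ≤ p) (hBer : ∀ i, μ {ω | X i ω = true} = ENNReal.ofReal p) (T : Finset ι) :
    μ.real {ω | ∀ i ∈ T, X i ω = true} = p ^ #T := by
  have h : μ {ω | ∀ i ∈ T, X i ω = true} = ENNReal.ofReal p ^ #T := by
    rw [setOf_forall_mem_eq_true]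
    exact (hX.measure_inter_preimage_eq_mul T fun _ _ => measurableSet_singleton _).trans
      (prod_eq_pow_card fun i _ => hBer i)
  rw [measureReal_def, h, ENNReal.toReal_pow, ENNReal.toReal_ofReal hp]

end Bernoulli

namespace TreePaths

variable {N n : ℕ} (ℓ ℓ' : Fin n → Fin N) {j k : ℕ}

/-- A vertex is the list of directions from it up to the root, so the path to the leaf `ℓ`
consists of the suffixes of `List.ofFn ℓ`; `pathVertex ℓ j` is its vertex at level `n - j`. -/
def pathVertex (j : ℕ) : List (Fin N) := (List.ofFn ℓ).drop j

def pathVertices : Finset (List (Fin N)) := (range (n + 1)).image (pathVertex ℓ)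

lemma length_pathVertex : (pathVertex ℓ j).length = n - j := by
  simp [pathVertex]

lemma pathVertex_eq_pathVertex_iff :
    pathVertex ℓ j = pathVertex ℓ' j ↔ ∀ i : Fin n, j ≤ i → ℓ i = ℓ' i := by
  constructor
  · intro h i hi
    have := congrArg (·[(i : ℕ) - j]?) h
    simpa [pathVertex, List.getElem?_drop, Nat.add_sub_cancel' hi] using this
  · intro h
    refine List.ext_getElem (by simp only [length_pathVertex]) fun i h₁ _ => ?_
    simp only [length_pathVertex] at h₁
    simpa [pathVertex] using h ⟨j + i, by omega⟩ (by simp)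

lemma pathVertex_root : pathVertex ℓ n = [] := by
  simp [pathVertex]

lemma exists_pathVertex_eq : ∃ j, pathVertex ℓ j = pathVertex ℓ' j :=
  ⟨n, (pathVertex_root ℓ).trans (pathVertex_root ℓ').symm⟩

/-- The paths to `ℓ` and `ℓ'` last meet at level `n - meetIndex ℓ ℓ'`. -/
def meetIndex (ℓ ℓ' : Fin n → Fin N) : ℕ := Nat.find (exists_pathVertex_eq ℓ ℓ')

lemma pathVertex_eq_pathVertex_iff_meetIndex_le :
    pathVertex ℓ j = pathVertex ℓ' j ↔ meetIndex ℓ ℓ' ≤ j := by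
  rw [meetIndex, Nat.find_le_iff]
  refine ⟨fun h => ⟨j, le_rfl, h⟩, fun ⟨m, hmj, hm⟩ => ?_⟩
  rw [pathVertex_eq_pathVertex_iff] at hm ⊢
  exact fun i hi => hm i (hmj.trans hi)

lemma meetIndex_le : meetIndex ℓ ℓ' ≤ n :=
  Nat.find_min' _ ((pathVertex_root ℓ).trans (pathVertex_root ℓ').symm)

lemma meetIndex_eq_zero_iff : meetIndex ℓ ℓ' = 0 ↔ ℓ = ℓ' := by
  simp [meetIndex, Nat.find_eq_zero, pathVertex]

lemma eq_of_pathVertex_eq (h : pathVertex ℓ j = pathVertex ℓ' k) (hj : j ≤ n) (hk : k ≤ n) :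
    j = k := by
  have := congrArg List.length h
  simp only [length_pathVertex] at this
  omega

lemma card_pathVertices : #(pathVertices ℓ) = n + 1 := by
  rw [pathVertices, card_image_of_injOn, card_range]
  intro a ha b hb hab
  simp only [coe_range, Set.mem_Iio] at ha hb
  exact eq_of_pathVertex_eq ℓ ℓ hab (by omega) (by omega)

lemma pathVertices_inter :
    pathVertices ℓ ∩ pathVertices ℓ' = (Ico (meetIndex ℓ ℓ') (n + 1)).image (pathVertex ℓ) := by
  ext v
  simp only [pathVertices, mem_inter, mem_image, mem_range, mem_Ico]
  constructor
  · rintro ⟨⟨a, ha, rfl⟩, b, hb, hba⟩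
    obtain rfl : b = a := eq_of_pathVertex_eq ℓ' ℓ hba (by omega) (by omega)
    exact ⟨b, ⟨(pathVertex_eq_pathVertex_iff_meetIndex_le ℓ ℓ').1 hba.symm, ha⟩, rfl⟩
  · rintro ⟨a, ⟨hma, ha⟩, rfl⟩
    exact ⟨⟨a, ha, rfl⟩, a, ha, ((pathVertex_eq_pathVertex_iff_meetIndex_le ℓ ℓ').2 hma).symm⟩

lemma card_pathVertices_union :
    #(pathVertices ℓ ∪ pathVertices ℓ') = n + 1 + meetIndex ℓ ℓ' := by
  have hinter : #(pathVertices ℓ ∩ pathVertices ℓ') = n + 1 - meetIndex ℓ ℓ' := by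
    rw [pathVertices_inter, card_image_of_injOn, Nat.card_Ico]
    intro a ha b hb hab
    simp only [coe_Ico, Set.mem_Ico] at ha hb
    exact eq_of_pathVertex_eq ℓ ℓ hab (by omega) (by omega)
  have := card_union_add_card_inter (pathVertices ℓ) (pathVertices ℓ')
  rw [hinter, card_pathVertices, card_pathVertices] at this
  have := meetIndex_le ℓ ℓ'
  omega

def leavesBelow (j : ℕ) : Finset (Fin n → Fin N) := {ℓ' | pathVertex ℓ j = pathVertex ℓ' j}

lemma mem_leavesBelow : ℓ' ∈ leavesBelow ℓ j ↔ meetIndex ℓ ℓ' ≤ j := by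
  rw [leavesBelow, mem_filter, pathVertex_eq_pathVertex_iff_meetIndex_le,
    and_iff_right (mem_univ _)]

lemma card_leavesBelow (hj : j ≤ n) : #(leavesBelow ℓ j) = N ^ j := by
  have hpi : leavesBelow ℓ j =
      Fintype.piFinset fun i : Fin n => if j ≤ (i : ℕ) then {ℓ i} else univ := by
    ext ℓ'
    simp only [leavesBelow, pathVertex_eq_pathVertex_iff, mem_filter, mem_univ, true_and,
      Fintype.mem_piFinset]
    refine forall_congr' fun i => ?_
    split_ifs <;> simp [*, eq_comm]
  simp [hpi, Fintype.card_piFinset, apply_ite card, prod_ite, Fin.card_filter_val_lt, hj]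

lemma card_meetIndex_eq (hk : 1 ≤ k) (hkn : k ≤ n) :
    (#{ℓ' : Fin n → Fin N | meetIndex ℓ ℓ' = k} : ℝ) = (N : ℝ) ^ k - (N : ℝ) ^ (k - 1) := by
  have hsdiff : ({ℓ' | meetIndex ℓ ℓ' = k} : Finset (Fin n → Fin N)) =
      leavesBelow ℓ k \ leavesBelow ℓ (k - 1) := by
    ext ℓ'
    simp only [mem_sdiff, mem_leavesBelow, mem_filter, mem_univ, true_and]
    omega
  have hsub : leavesBelow ℓ (k - 1) ⊆ leavesBelow ℓ k := fun ℓ' h =>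
    (mem_leavesBelow ℓ ℓ').2 (((mem_leavesBelow ℓ ℓ').1 h).trans (Nat.sub_le k 1))
  have hcard := card_sdiff_add_card_eq_card hsub
  rw [card_leavesBelow ℓ hkn, card_leavesBelow ℓ (by omega)] at hcard
  rw [hsdiff, eq_sub_iff_add_eq]
  exact_mod_cast hcard

lemma sum_erase_pow_meetIndex (p : ℝ) :
    ∑ ℓ' ∈ univ.erase ℓ, p ^ (n + 1 + meetIndex ℓ ℓ') =
      ∑ k ∈ Icc 1 n, ((N : ℝ) ^ k - (N : ℝ) ^ (k - 1)) * p ^ (n + 1 + k) := by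
  have hmaps : ∀ ℓ' ∈ univ.erase ℓ, meetIndex ℓ ℓ' ∈ Icc 1 n := fun ℓ' hℓ' =>
    mem_Icc.2 ⟨Nat.one_le_iff_ne_zero.2 fun h =>
      ne_of_mem_erase hℓ' ((meetIndex_eq_zero_iff ℓ ℓ').1 h).symm, meetIndex_le ℓ ℓ'⟩
  rw [← sum_fiberwise_of_maps_to hmaps]
  refine sum_congr rfl fun k hk => ?_
  rw [mem_Icc] at hk
  have hfiber : {ℓ' ∈ univ.erase ℓ | meetIndex ℓ ℓ' = k} =
      ({ℓ' | meetIndex ℓ ℓ' = k} : Finset (Fin n → Fin N)) := by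
    ext ℓ'
    simp only [mem_filter, mem_erase, mem_univ, and_true, true_and, and_iff_right_iff_imp]
    rintro h rfl
    have := (meetIndex_eq_zero_iff ℓ' ℓ').2 rfl
    omega
  rw [hfiber, sum_congr rfl fun ℓ' hℓ' => by rw [(mem_filter.1 hℓ').2], sum_const, nsmul_eq_mul,
    card_meetIndex_eq ℓ hk.1 hk.2]

end TreePaths

open TreePaths

theorem stmt1_general (N n : ℕ) (p : ℝ) (hp0 : 0 ≤ p)
    {Ω : Type} [MeasurableSpace Ω] (μ : Measure Ω) [IsProbabilityMeasure μ]
    (X : List (Fin N) → Ω → Bool)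
    (hmeas : ∀ v, Measurable (X v))
    (hindep : iIndepFun X μ)
    (hBer : ∀ v, μ {ω | X v ω = true} = ENNReal.ofReal p) :
    (μ[fun ω => (((Finset.univ.filter (fun ℓ : Fin n → Fin N =>
        ∀ j ∈ Finset.range (n + 1), X ((List.ofFn ℓ).drop j) ω = true)).card : ℝ)) ^ 2])
      = (μ[fun ω => ((Finset.univ.filter (fun ℓ : Fin n → Fin N =>
          ∀ j ∈ Finset.range (n + 1), X ((List.ofFn ℓ).drop j) ω = true)).card : ℝ)])
        + ∑ k ∈ Finset.Icc 1 n, ((N : ℝ) - 1) * (N : ℝ) ^ (n + k - 1) * p ^ (n + k + 1) := by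
  set A : (Fin n → Fin N) → Set Ω := fun ℓ => {ω | ∀ v ∈ pathVertices ℓ, X v ω = true}
  have hmem : ∀ ℓ ω, ω ∈ A ℓ ↔ ∀ j ∈ range (n + 1), X ((List.ofFn ℓ).drop j) ω = true := by
    simp [A, pathVertices, pathVertex]
  have hA : ∀ ℓ, MeasurableSet (A ℓ) := fun ℓ => measurableSet_setOf_forall_mem_eq_true hmeas _
  have hpair : ∀ ℓ ℓ', μ.real (A ℓ ∩ A ℓ') = p ^ (n + 1 + meetIndex ℓ ℓ') := by
    intro ℓ ℓ'
    rw [← card_pathVertices_union, ← measureReal_setOf_forall_mem_eq_true hindep hp0 hBer]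
    congr 1
    ext ω
    simp [A, or_imp, forall_and]
  simp_rw [← hmem]
  rw [integral_card_filter_mem_sq A hA, integral_card_filter_mem A hA]
  calc ∑ ℓ, ∑ ℓ', μ.real (A ℓ ∩ A ℓ')
      = ∑ ℓ : Fin n → Fin N, (μ.real (A ℓ) +
          ∑ k ∈ Icc 1 n, ((N : ℝ) ^ k - (N : ℝ) ^ (k - 1)) * p ^ (n + 1 + k)) := by
        refine sum_congr rfl fun ℓ _ => ?_
        rw [← add_sum_erase _ _ (mem_univ ℓ), Set.inter_self, ← sum_erase_pow_meetIndex ℓ]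
        simp_rw [hpair]
    _ = _ := by
        rw [sum_add_distrib, sum_const, card_univ, Fintype.card_fun, Fintype.card_fin,
          Fintype.card_fin, nsmul_eq_mul, mul_sum]
        congr 1
        refine sum_congr rfl fun k hk => ?_
        obtain ⟨m, rfl⟩ : ∃ m, k = m + 1 := ⟨k - 1, by grind⟩
        rw [Nat.add_sub_cancel, show n + (m + 1) - 1 = n + m by omega]
        push_cast
        ring

/-- Vertices of the rooted `N`-ary tree are lists of directions (root = `[]`, children of
`v` are `d :: v`).  `Θₙ` is the number of open root-to-leaf paths in the depth-`n` tree,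
where each vertex is open (`X v = true`) independently with probability `p`.
Second moment: `E(Θₙ²) = E(Θₙ) + Σ_{k=1}^{n} (N-1) N^{n+k-1} p^{n+k+1}`. -/
theorem stmt1 (N n : ℕ) (hN : 2 ≤ N) (p : ℝ) (hp0 : 0 ≤ p) (hp1 : p ≤ 1)
    {Ω : Type} [MeasurableSpace Ω] (μ : Measure Ω) [IsProbabilityMeasure μ]
    (X : List (Fin N) → Ω → Bool)
    (hmeas : ∀ v, Measurable (X v))
    (hindep : iIndepFun X μ)
    (hBer : ∀ v, μ {ω | X v ω = true} = ENNReal.ofReal p) :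
    (μ[fun ω => (((Finset.univ.filter (fun ℓ : Fin n → Fin N =>
        ∀ j ∈ Finset.range (n + 1), X ((List.ofFn ℓ).drop j) ω = true)).card : ℝ)) ^ 2])
      = (μ[fun ω => ((Finset.univ.filter (fun ℓ : Fin n → Fin N =>
          ∀ j ∈ Finset.range (n + 1), X ((List.ofFn ℓ).drop j) ω = true)).card : ℝ)])
        + ∑ k ∈ Finset.Icc 1 n, ((N : ℝ) - 1) * (N : ℝ) ^ (n + k - 1) * p ^ (n + k + 1) :=
  stmt1_general N n p hp0 μ X hmeas hindep hBer
end

section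
/- For N ≥ 2 and p > 1/N, the limit of P(Θ_n ≥ 1) as n → ∞ is at least (Np - 1)/(N - 1); for p ≤ 1/N, the limit is 0. -/
/-!
Splitting a path at its first step, an open path of depth `n + 1` below `v` exists iff `v` is open
and one of the subtrees rooted at the `N` children of `v` carries an open path of depth `n`. These
`N + 1` events live on disjoint sets of vertices, hence are independent, so
`P(Θₙ ≥ 1) = fⁿ(p)` with `f x = p (1 - (1 - x)ᴺ)`. The iterates decrease to a fixed point `L` of
`f` in `[0, 1]`. If `Np ≤ 1` and `L > 0`, strict Bernoulli gives `f L < NpL ≤ L`, a contradiction.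
If `Np > 1`, the threshold `t = (Np - 1)/(N - 1)` satisfies `t ≤ f t`, so by monotonicity of `f`
it stays below every iterate; with `s = 1 - t` the inequality `t ≤ f t` reduces to
`s ^ (N - 1) * (N - (N - 1) s) ≤ 1` on `[0, 1]`.
-/

open MeasureTheory ProbabilityTheory Filter Function Set
open scoped Classical Topology

theorem ProbabilityTheory.iIndep.iSup_of_pairwise_disjoint {Ω ι κ : Type*} {mΩ : MeasurableSpace Ω}
    {μ : Measure Ω} {m : ι → MeasurableSpace Ω} (h_le : ∀ i, m i ≤ mΩ) (h : iIndep m μ)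
    {T : κ → Set ι} (hT : Pairwise (Disjoint on T)) :
    iIndep (fun k => ⨆ i ∈ T k, m i) μ := by
  have := h.isProbabilityMeasure
  rw [iIndep_iff]
  intro s E hE
  induction s using Finset.induction_on with
  | empty => simp
  | insert a s ha ih =>
    rw [Finset.set_biInter_insert, Finset.prod_insert ha,
      ← ih fun k hk => hE k (Finset.mem_insert_of_mem hk)]
    have hdisj : Disjoint (T a) (⋃ k ∈ s, T k) :=
      disjoint_iUnion₂_right.2 fun k hk => hT (ne_of_mem_of_not_mem hk ha).symm
    refine (Indep_iff _ _ μ).1 (indep_iSup_of_disjoint h_le h hdisj) _ _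
      (hE a (Finset.mem_insert_self a s)) (Finset.measurableSet_biInter s fun k hk => ?_)
    have hmono : (⨆ i ∈ T k, m i) ≤ ⨆ i ∈ ⋃ k ∈ s, T k, m i :=
      biSup_mono fun i hi => mem_biUnion hk hi
    exact hmono _ (hE k (Finset.mem_insert_of_mem hk))

lemma List.drop_ofFn_snoc {α : Type*} {n : ℕ} (ℓ : Fin n → α) (a : α) {j : ℕ} (hj : j ≤ n) :
    (List.ofFn (Fin.snoc ℓ a : Fin (n + 1) → α)).drop j = (List.ofFn ℓ).drop j ++ [a] := by
  rw [List.ofFn_succ', List.concat_eq_append, List.drop_append_of_le_length (by simpa using hj)]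
  simp

section Recursion

variable {N : ℕ} {p : ℝ}

/-- If each child subtree carries an open path with probability `x`, then `branchMap N p x` is
the probability that the parent is open and one of its `N` subtrees carries an open path. -/
def branchMap (N : ℕ) (p x : ℝ) : ℝ := p * (1 - (1 - x) ^ N)

noncomputable def openPathProb (N : ℕ) (p : ℝ) (n : ℕ) : ℝ := (branchMap N p)^[n] p

lemma branchMap_le_branchMap (hp : 0 ≤ p) {x y : ℝ} (hxy : x ≤ y) (hy : y ≤ 1) :
    branchMap N p x ≤ branchMap N p y := by
  unfold branchMap
  gcongr

lemma branchMap_mem_Icc (hp0 : 0 ≤ p) (hp1 : p ≤ 1) {x : ℝ} (hx : x ∈ Icc (0 : ℝ) 1) :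
    branchMap N p x ∈ Icc (0 : ℝ) 1 := by
  have h0 : 0 ≤ (1 - x) ^ N := pow_nonneg (by linarith [hx.2]) N
  have h1 : (1 - x) ^ N ≤ 1 := pow_le_one₀ (by linarith [hx.2]) (by linarith [hx.1])
  constructor <;> unfold branchMap <;> nlinarith

lemma openPathProb_zero : openPathProb N p 0 = p := rfl

lemma openPathProb_succ (n : ℕ) :
    openPathProb N p (n + 1) = branchMap N p (openPathProb N p n) :=
  iterate_succ_apply' _ _ _

lemma openPathProb_mem_Icc (hp0 : 0 ≤ p) (hp1 : p ≤ 1) (n : ℕ) :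
    openPathProb N p n ∈ Icc (0 : ℝ) 1 := by
  induction n with
  | zero => exact ⟨hp0, hp1⟩
  | succ n ih => rw [openPathProb_succ]; exact branchMap_mem_Icc hp0 hp1 ih

lemma openPathProb_antitone (hp0 : 0 ≤ p) (hp1 : p ≤ 1) : Antitone (openPathProb N p) := by
  refine antitone_nat_of_succ_le fun n => ?_
  induction n with
  | zero =>
    have : 0 ≤ (1 - p) ^ N := pow_nonneg (by linarith) N
    rw [openPathProb_succ, openPathProb_zero, branchMap]
    nlinarith
  | succ n ih =>
    simpa only [openPathProb_succ] using
      branchMap_le_branchMap hp0 ih (openPathProb_mem_Icc hp0 hp1 n).2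

lemma tendsto_openPathProb (hp0 : 0 ≤ p) (hp1 : p ≤ 1) :
    Tendsto (openPathProb N p) atTop (𝓝 (⨅ n, openPathProb N p n)) :=
  tendsto_atTop_ciInf (openPathProb_antitone hp0 hp1)
    ⟨0, forall_mem_range.2 fun n => (openPathProb_mem_Icc hp0 hp1 n).1⟩

lemma isFixedPt_iInf_openPathProb (hp0 : 0 ≤ p) (hp1 : p ≤ 1) :
    IsFixedPt (branchMap N p) (⨅ n, openPathProb N p n) :=
  isFixedPt_of_tendsto_iterate (tendsto_openPathProb hp0 hp1)
    (by unfold branchMap; fun_prop)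

lemma pow_mul_add_one_sub_mul_le_one (M : ℕ) {s : ℝ} (hs0 : 0 ≤ s) (hs1 : s ≤ 1) :
    s ^ M * (M + 1 - M * s) ≤ 1 := by
  induction M with
  | zero => simp
  | succ M ih =>
    have hsM : s ^ (M + 1) ≤ 1 := pow_le_one₀ hs0 hs1
    calc s ^ (M + 1) * ((M + 1 : ℕ) + 1 - (M + 1 : ℕ) * s)
        = s * (s ^ M * (M + 1 - M * s)) + s ^ (M + 1) * (1 - s) := by push_cast; ring
      _ ≤ s * 1 + 1 * (1 - s) := by gcongr
      _ = 1 := by ring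

lemma threshold_le_branchMap (hN : 2 ≤ N) (hp : 1 / (N : ℝ) < p) (hp1 : p ≤ 1) :
    (N * p - 1) / (N - 1) ≤ branchMap N p ((N * p - 1) / (N - 1)) := by
  obtain ⟨M, rfl⟩ : ∃ M, N = M + 1 := ⟨N - 1, by omega⟩
  have hM : (0 : ℝ) < M := by norm_cast; omega
  have hNp : 1 < (M + 1) * p := by push_cast at hp; rwa [div_lt_iff₀' (by positivity)] at hp
  push_cast
  rw [add_sub_cancel_right]
  obtain ⟨s, hs⟩ : ∃ s, s = 1 - ((M + 1) * p - 1) / M := ⟨_, rfl⟩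
  have hsM : M * s = (M + 1) * (1 - p) := by rw [hs]; field_simp; ring
  rw [show ((M + 1) * p - 1) / M = 1 - s by linarith, branchMap]
  have hs0 : 0 ≤ s := by nlinarith
  have hs1 : s ≤ 1 := by nlinarith
  have hbound : s ^ M * ((M + 1) * p) ≤ 1 := by
    simpa only [show (M + 1 : ℝ) - M * s = (M + 1) * p by linarith]
      using pow_mul_add_one_sub_mul_le_one M hs0 hs1
  have hgap : ((M : ℝ) + 1) * (p * (1 - (1 - (1 - s)) ^ (M + 1)) - (1 - s))
      = s - s * (s ^ M * ((M + 1) * p)) := by linear_combination hsM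
  have : 0 ≤ ((M : ℝ) + 1) * (p * (1 - (1 - (1 - s)) ^ (M + 1)) - (1 - s)) := by
    rw [hgap]; nlinarith
  linarith [(mul_nonneg_iff_of_pos_left (by positivity : (0 : ℝ) < M + 1)).1 this]

lemma threshold_le_openPathProb (hN : 2 ≤ N) (hp : 1 / (N : ℝ) < p) (hp1 : p ≤ 1) (n : ℕ) :
    (N * p - 1) / (N - 1) ≤ openPathProb N p n := by
  have hp0 : 0 ≤ p := le_trans (by positivity) hp.le
  induction n with
  | zero =>
    have hN2 : (2 : ℝ) ≤ N := by exact_mod_cast hN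
    have hN1 : (0 : ℝ) < N - 1 := by linarith
    rw [openPathProb_zero, div_le_iff₀ hN1]
    linarith
  | succ n ih =>
    rw [openPathProb_succ]
    exact (threshold_le_branchMap hN hp hp1).trans
      (branchMap_le_branchMap hp0 ih (openPathProb_mem_Icc hp0 hp1 n).2)

lemma iInf_openPathProb_eq_zero (hN : 2 ≤ N) (hp0 : 0 < p) (hp1 : p ≤ 1) (hp : p ≤ 1 / N) :
    ⨅ n, openPathProb N p n = 0 := by
  set L := ⨅ n, openPathProb N p n
  have hL : L ∈ Icc (0 : ℝ) 1 := isClosed_Icc.mem_of_tendsto (tendsto_openPathProb hp0.le hp1)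
    (Eventually.of_forall (openPathProb_mem_Icc hp0.le hp1))
  by_contra hL0
  have hLpos : 0 < L := lt_of_le_of_ne hL.1 (Ne.symm hL0)
  have hN1 : (1 : ℝ) < N := by exact_mod_cast hN
  have hbernoulli : 1 + N * (-L) < (1 + -L) ^ (N : ℝ) :=
    one_add_mul_self_lt_rpow_one_add (by linarith [hL.2]) (by linarith) hN1
  rw [Real.rpow_natCast, ← sub_eq_add_neg] at hbernoulli
  have hNp : N * p ≤ 1 := by rwa [le_div_iff₀ (by positivity), mul_comm] at hp
  have hfix : branchMap N p L = L := isFixedPt_iInf_openPathProb hp0.le hp1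
  refine lt_irrefl L ?_
  calc L = p * (1 - (1 - L) ^ N) := hfix.symm
    _ < p * (N * L) := by gcongr; linarith
    _ = (N * p) * L := by ring
    _ ≤ 1 * L := by gcongr
    _ = L := one_mul L

end Recursion

section Tree

variable {Ω : Type*} {N : ℕ} {X : List (Fin N) → Ω → Bool}

abbrev sigmaOn (X : List (Fin N) → Ω → Bool) (S : Set (List (Fin N))) : MeasurableSpace Ω :=
  ⨆ w ∈ S, MeasurableSpace.comap (X w) inferInstance

lemma sigmaOn_mono {S T : Set (List (Fin N))} (h : S ⊆ T) : sigmaOn X S ≤ sigmaOn X T :=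
  biSup_mono fun _ hw => h hw

lemma measurableSet_sigmaOn {S : Set (List (Fin N))} {v : List (Fin N)} (hv : v ∈ S) :
    MeasurableSet[sigmaOn X S] {ω | X v ω = true} :=
  le_biSup (fun w => MeasurableSpace.comap (X w) inferInstance) hv _
    ⟨{true}, trivial, rfl⟩

/-- Children of `v` are the lists `d :: v`. A path of depth `n` below `v` is coded by
`ℓ : Fin n → Fin N` and visits the vertices `(ofFn ℓ).drop j ++ v`, `j = n, …, 0`; its first
step from `v` is `ℓ (Fin.last _)`. -/
def openPathFrom (X : List (Fin N) → Ω → Bool) (n : ℕ) (v : List (Fin N)) : Set Ω :=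
  {ω | ∃ ℓ : Fin n → Fin N, ∀ j ∈ Finset.range (n + 1), X ((List.ofFn ℓ).drop j ++ v) ω = true}

lemma openPathFrom_zero (v : List (Fin N)) : openPathFrom X 0 v = {ω | X v ω = true} := by
  ext ω
  simp [openPathFrom]

lemma openPathFrom_succ (n : ℕ) (v : List (Fin N)) :
    openPathFrom X (n + 1) v = {ω | X v ω = true} ∩ ⋃ d, openPathFrom X n (d :: v) := by
  ext ω
  simp only [openPathFrom, mem_ofPred_eq, mem_inter_iff, mem_iUnion, Finset.mem_range]
  constructor
  · rintro ⟨ℓ, h⟩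
    rw [← Fin.snoc_init_self ℓ] at h
    refine ⟨?_, ℓ (Fin.last n), Fin.init ℓ, fun j hj => ?_⟩
    · simpa [List.drop_eq_nil_of_le] using h (n + 1) (by omega)
    · have := h j (by omega)
      rwa [List.drop_ofFn_snoc _ _ (by omega), List.append_assoc, List.singleton_append] at this
  · rintro ⟨hv, d, ℓ, h⟩
    refine ⟨Fin.snoc ℓ d, fun j hj => ?_⟩
    rcases Nat.lt_succ_iff_lt_or_eq.1 hj with hj | rfl
    · rw [List.drop_ofFn_snoc ℓ d (Nat.le_of_lt_succ hj), List.append_assoc, List.singleton_append]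
      exact h j hj
    · simpa [List.drop_eq_nil_of_le] using hv

lemma measurableSet_openPathFrom (n : ℕ) (v : List (Fin N)) :
    MeasurableSet[sigmaOn X {w | v <:+ w}] (openPathFrom X n v) := by
  have : openPathFrom X n v = ⋃ ℓ : Fin n → Fin N, ⋂ j ∈ Finset.range (n + 1),
      {ω | X ((List.ofFn ℓ).drop j ++ v) ω = true} := by
    ext ω
    simp [openPathFrom]
  rw [this]
  exact .iUnion fun ℓ => Finset.measurableSet_biInter _ fun j _ =>
    measurableSet_sigmaOn (List.suffix_append _ _)

lemma pairwise_disjoint_subtrees (v : List (Fin N)) :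
    Pairwise (Disjoint on fun d : Fin N => {w : List (Fin N) | d :: v <:+ w}) := by
  intro d d' hdd'
  refine disjoint_left.2 fun w hd hd' => hdd' ?_
  have := (List.suffix_of_suffix_length_le hd hd' (by simp)).eq_of_length (by simp)
  exact List.head_eq_of_cons_eq this

lemma disjoint_root_subtrees (v : List (Fin N)) :
    Disjoint {v} (⋃ d : Fin N, {w : List (Fin N) | d :: v <:+ w}) := by
  simp only [disjoint_singleton_left, mem_iUnion, mem_ofPred_eq, not_exists]
  exact fun d h => by simpa using h.length_le

lemma measure_openPathFrom [MeasurableSpace Ω] {μ : Measure Ω} [IsProbabilityMeasure μ] {p : ℝ}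
    (hp0 : 0 ≤ p) (hp1 : p ≤ 1) (hX : ∀ v, Measurable (X v)) (hindep : iIndepFun X μ)
    (hopen : ∀ v, μ {ω | X v ω = true} = ENNReal.ofReal p) (n : ℕ) (v : List (Fin N)) :
    μ (openPathFrom X n v) = ENNReal.ofReal (openPathProb N p n) := by
  have h_le (w : List (Fin N)) : MeasurableSpace.comap (X w) inferInstance ≤ ‹_› :=
    (hX w).comap_le
  induction n generalizing v with
  | zero => rw [openPathFrom_zero, hopen, openPathProb_zero]
  | succ n ih =>
    have hE (d : Fin N) : MeasurableSet[sigmaOn X {w | d :: v <:+ w}] (openPathFrom X n (d :: v)) :=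
      measurableSet_openPathFrom n (d :: v)
    have hmeasE (d : Fin N) : MeasurableSet (openPathFrom X n (d :: v)) :=
      iSup₂_le (fun w _ => h_le w) _ (hE d)
    have hnone : μ (⋃ d, openPathFrom X n (d :: v))ᶜ
        = (1 - ENNReal.ofReal (openPathProb N p n)) ^ N := by
      rw [compl_iUnion, (hindep.iIndep.iSup_of_pairwise_disjoint h_le
        (pairwise_disjoint_subtrees v)).meas_iInter fun d => (hE d).compl]
      simp only [prob_compl_eq_one_sub (hmeasE _), ih, Finset.prod_const, Finset.card_univ,
        Fintype.card_fin]
    have hsome : μ (⋃ d, openPathFrom X n (d :: v))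
        = 1 - (1 - ENNReal.ofReal (openPathProb N p n)) ^ N := by
      rw [← hnone, prob_compl_eq_one_sub (.iUnion hmeasE),
        ENNReal.sub_sub_cancel ENNReal.one_ne_top prob_le_one]
    have hroot := indep_iSup_of_disjoint h_le hindep.iIndep (disjoint_root_subtrees v)
    obtain ⟨hr0, hr1⟩ := openPathProb_mem_Icc (N := N) hp0 hp1 n
    rw [openPathFrom_succ, (Indep_iff _ _ μ).1 hroot _ _ (measurableSet_sigmaOn rfl)
      (.iUnion fun d => sigmaOn_mono (subset_iUnion _ d) _ (hE d)), hopen, hsome,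
      openPathProb_succ, branchMap, ENNReal.ofReal_mul hp0,
      ENNReal.ofReal_sub _ (pow_nonneg (sub_nonneg.2 hr1) N), ENNReal.ofReal_pow (sub_nonneg.2 hr1),
      ENNReal.ofReal_sub _ hr0, ENNReal.ofReal_one]

end Tree

lemma setOf_one_le_card_filter_eq_openPathFrom {Ω : Type*} {N : ℕ} (X : List (Fin N) → Ω → Bool)
    (n : ℕ) :
    {ω | 1 ≤ (Finset.univ.filter (fun ℓ : Fin n → Fin N =>
        ∀ j ∈ Finset.range (n + 1), X ((List.ofFn ℓ).drop j) ω = true)).card}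
      = openPathFrom X n [] := by
  ext ω
  simp [openPathFrom, Finset.one_le_card, Finset.filter_nonempty_iff]

/-- Vertices of the rooted `N`-ary tree are lists of directions (root = `[]`, children of
`v` are `d :: v`); each vertex is open independently with probability `p`, and
`Θ n ω` is the number of open root-to-leaf paths in the depth-`n` tree.
For `p > 1/N` the limit of `P(Θₙ ≥ 1)` is at least `(Np - 1)/(N - 1)`;
for `p ≤ 1/N` the limit is `0`. -/
theorem stmt6 (N : ℕ) (hN : 2 ≤ N) (p : ℝ) (hp0 : 0 < p) (hp1 : p < 1)
    {Ω : Type} [MeasurableSpace Ω] (μ : Measure Ω) [IsProbabilityMeasure μ]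
    (X : List (Fin N) → Ω → Bool)
    (hmeas : ∀ v, Measurable (X v))
    (hindep : iIndepFun X μ)
    (hBer : ∀ v, μ {ω | X v ω = true} = ENNReal.ofReal p)
    (Θ : ℕ → Ω → ℕ)
    (hΘ : ∀ n ω, Θ n ω = (Finset.univ.filter (fun ℓ : Fin n → Fin N =>
        ∀ j ∈ Finset.range (n + 1), X ((List.ofFn ℓ).drop j) ω = true)).card) :
    (1 / N < p → ∃ L : ℝ, Tendsto (fun n => (μ {ω | 1 ≤ Θ n ω}).toReal) atTop (nhds L) ∧
        (N * p - 1) / (N - 1) ≤ L) ∧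
    (p ≤ 1 / N → Tendsto (fun n => (μ {ω | 1 ≤ Θ n ω}).toReal) atTop (nhds 0)) := by
  have hprob : (fun n => (μ {ω | 1 ≤ Θ n ω}).toReal) = openPathProb N p := by
    ext n
    simp only [hΘ, setOf_one_le_card_filter_eq_openPathFrom,
      measure_openPathFrom hp0.le hp1.le hmeas hindep hBer,
      ENNReal.toReal_ofReal (openPathProb_mem_Icc hp0.le hp1.le n).1]
  rw [hprob]
  refine ⟨fun hp => ⟨_, tendsto_openPathProb hp0.le hp1.le,
    le_ciInf (threshold_le_openPathProb hN hp hp1.le)⟩, fun hp => ?_⟩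
  simpa only [iInf_openPathProb_eq_zero hN hp0 hp1.le hp] using
    tendsto_openPathProb (N := N) hp0.le hp1.le
end

section
/- For the N-ary tree of depth n and 1 ≤ m ≤ k, the number a_m of ordered pairs of downward paths of length k sharing exactly m vertices satisfies a_m ≤ 2 M N^{k - m + 1}, where M = (N^{n+1} - N^k)/(N - 1) is the total number of downward paths of length k. -/
/-!
Two downward paths that meet do so in a segment, and the top vertex of one of them lies on the
other. Suppose the top of `P'` lies on `P` and `|P ∩ P'| = m`. Then `P ∩ P'` consists of the top
`m` vertices of `P'`, so the bottom vertex of `P` is `u ++ w`, where `w` is the lowest common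
vertex and `u` has length at most `L = k - m + 1` and does not end in the letter `c` by which
`P'` leaves `w` downwards. Padding `u` with copies of `c` to length `L` is injective, so for
fixed `P'` there are at most `N ^ L` such `P`. The case where the top of `P` lies on `P'` is
symmetric, whence the factor `2`.
-/

open scoped Classical

/-- The level-`j` vertices of the rooted `N`-ary tree, encoded as lists of directions read
from the vertex back up to the root (root = `[]`, children of `v` are `d :: v`,
the ancestor `i` levels above `v` is `v.drop i`). -/
noncomputable def listsLen (N j : ℕ) : Finset (List (Fin N)) :=
  (Finset.univ : Finset (Fin j → Fin N)).image List.ofFn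

/-- A downward path of length `k` in the depth-`n` tree is determined by its bottom vertex,
which can be any vertex at level `j` with `k ≤ j ≤ n`. -/
noncomputable def pathBottoms (N n k : ℕ) : Finset (List (Fin N)) :=
  (Finset.Icc k n).biUnion (listsLen N)

/-- The vertex set of the downward path of length `k` with bottom vertex `b`. -/
def pathSet {N : ℕ} (b : List (Fin N)) (k : ℕ) : Finset (List (Fin N)) :=
  (Finset.range (k + 1)).image (fun i => b.drop i)

open Finset

theorem Finset.card_filter_product_le_of_snd {α β : Type*} {s : Finset α} {t : Finset β}
    {p : α × β → Prop} [DecidablePred p] {c : ℕ} (h : ∀ y ∈ t, #{x ∈ s | p (x, y)} ≤ c) :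
    #{q ∈ s ×ˢ t | p q} ≤ #t * c := by
  rw [card_filter, sum_product_right]
  simp_rw [← card_filter]
  exact sum_le_card_nsmul t _ c h

theorem Finset.card_filter_product_le_of_fst {α β : Type*} {s : Finset α} {t : Finset β}
    {p : α × β → Prop} [DecidablePred p] {c : ℕ} (h : ∀ x ∈ s, #{y ∈ t | p (x, y)} ≤ c) :
    #{q ∈ s ×ˢ t | p q} ≤ #s * c := by
  rw [card_filter, sum_product]
  simp_rw [← card_filter]
  exact sum_le_card_nsmul s _ c h

theorem Finset.eq_Icc_of_add_one_mem {J : Finset ℕ} {n : ℕ} (hJ : J ⊆ range (n + 1))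
    (hsucc : ∀ j ∈ J, j < n → j + 1 ∈ J) : J = Icc (n + 1 - #J) n := by
  have hle : ∀ j ∈ J, j ≤ n := fun j hj => Nat.lt_succ_iff.mp (mem_range.mp (hJ hj))
  have hIcc : ∀ i ∈ J, Icc i n ⊆ J := by
    intro i hi j hj
    obtain ⟨hij, hjn⟩ := mem_Icc.mp hj
    clear hj
    induction j, hij using Nat.le_induction with
    | base => exact hi
    | succ j hij ih => exact hsucc j (ih (by omega)) (by omega)
  ext j
  refine ⟨fun hj => mem_Icc.mpr ⟨?_, hle j hj⟩, fun hj => ?_⟩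
  · have := card_le_card (hIcc j hj)
    simp only [Nat.card_Icc] at this
    omega
  · obtain ⟨hlo, hhi⟩ := mem_Icc.mp hj
    by_contra hjJ
    have hsub : J ⊆ Ioc j n := fun i hi => mem_Ioc.mpr ⟨by
      by_contra! hij
      exact hjJ (hIcc i hi (mem_Icc.mpr ⟨hij, hhi⟩)), hle i hi⟩
    have := card_le_card hsub
    simp only [Nat.card_Ioc] at this
    omega

theorem List.rdropWhile_append_replicate {α : Type*} [DecidableEq α] {u : List α} {c : α}
    (hu : u.getLast? ≠ some c) (n : ℕ) :
    (u ++ replicate n c).rdropWhile (· == c) = u := by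
  induction n with
  | zero =>
    rw [replicate_zero, append_nil, rdropWhile_eq_self_iff]
    intro hne hlast
    exact hu (by rw [getLast?_eq_some_getLast hne, eq_of_beq hlast])
  | succ n ih => rw [replicate_succ', ← append_assoc, rdropWhile_concat_pos _ _ _ (by simp), ih]

theorem List.drop_add_eq_of_drop_eq {α : Type*} {l l' : List α} {i j : ℕ}
    (h : l.drop i = l'.drop j) (t : ℕ) : l.drop (i + t) = l'.drop (j + t) := by
  rw [← drop_drop, h, drop_drop]

section Tree

variable {N : ℕ}

theorem mem_listsLen {j : ℕ} {l : List (Fin N)} : l ∈ listsLen N j ↔ l.length = j := by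
  simp only [listsLen, mem_image, mem_univ, true_and]
  constructor
  · rintro ⟨f, rfl⟩
    exact List.length_ofFn
  · rintro rfl
    exact ⟨l.get, List.ofFn_get l⟩

theorem card_listsLen (N j : ℕ) : #(listsLen N j) = N ^ j := by
  rw [listsLen, card_image_of_injective _ List.ofFn_injective, card_univ, Fintype.card_fun,
    Fintype.card_fin, Fintype.card_fin]

theorem mem_pathBottoms {n k : ℕ} {b : List (Fin N)} :
    b ∈ pathBottoms N n k ↔ k ≤ b.length ∧ b.length ≤ n := by
  simp [pathBottoms, mem_listsLen]

theorem mem_pathSet {k : ℕ} {b v : List (Fin N)} :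
    v ∈ pathSet b k ↔ ∃ i ≤ k, b.drop i = v := by
  simp only [pathSet, mem_image, mem_range, Nat.lt_succ_iff]

theorem drop_mem_pathSet_or_drop_mem_pathSet {k : ℕ} {b b' : List (Fin N)}
    (hne : (pathSet b k ∩ pathSet b' k).Nonempty) :
    b'.drop k ∈ pathSet b k ∨ b.drop k ∈ pathSet b' k := by
  obtain ⟨v, hv⟩ := hne
  obtain ⟨⟨i, hi, rfl⟩, ⟨j, hj, hij⟩⟩ := And.imp mem_pathSet.mp mem_pathSet.mp (mem_inter.mp hv)
  rcases le_total i j with hle | hle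
  · have := List.drop_add_eq_of_drop_eq hij (k - j)
    rw [Nat.add_sub_cancel' hj] at this
    exact Or.inl (mem_pathSet.mpr ⟨i + (k - j), by omega, this.symm⟩)
  · have := List.drop_add_eq_of_drop_eq hij.symm (k - i)
    rw [Nat.add_sub_cancel' hi] at this
    exact Or.inr (mem_pathSet.mpr ⟨j + (k - i), by omega, this.symm⟩)

theorem card_pathSet_inter {k : ℕ} {b b' : List (Fin N)} (hb' : k ≤ b'.length) :
    #(pathSet b k ∩ pathSet b' k) = #{j ∈ range (k + 1) | b'.drop j ∈ pathSet b k} := by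
  have hb'k : pathSet b' k = (range (k + 1)).image (b'.drop ·) := rfl
  rw [inter_comm, ← filter_mem_eq_inter, hb'k, filter_image, card_image_of_injOn]
  intro i hi j hj hij
  have hik := mem_range.mp (mem_filter.mp hi).1
  have hjk := mem_range.mp (mem_filter.mp hj).1
  have := congrArg List.length hij
  simp only [List.length_drop] at this
  omega

theorem filter_drop_mem_pathSet_eq_Icc {k : ℕ} {b b' : List (Fin N)} (hb' : k ≤ b'.length)
    (htop : b'.drop k ∈ pathSet b k) :
    {j ∈ range (k + 1) | b'.drop j ∈ pathSet b k} =
      Icc (k + 1 - #(pathSet b k ∩ pathSet b' k)) k := by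
  rw [card_pathSet_inter hb']
  refine eq_Icc_of_add_one_mem (filter_subset _ _) fun j hj hjk => ?_
  obtain ⟨i, hi, hij⟩ := mem_pathSet.mp (mem_filter.mp hj).2
  obtain ⟨i', hi', hi'k⟩ := mem_pathSet.mp htop
  have h1 := congrArg List.length hij
  have h2 := congrArg List.length hi'k
  simp only [List.length_drop] at h1 h2
  exact mem_filter.mpr ⟨mem_range.mpr (by omega),
    mem_pathSet.mpr ⟨i + 1, by omega, List.drop_add_eq_of_drop_eq hij 1⟩⟩

theorem exists_eq_append_drop_of_card_inter_eq {k m : ℕ} {b b' : List (Fin N)}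
    (hb : k ≤ b.length) (hb' : k ≤ b'.length) (hm1 : 1 ≤ m) (hmk : m ≤ k)
    (hcard : #(pathSet b k ∩ pathSet b' k) = m) (htop : b'.drop k ∈ pathSet b k) :
    ∃ u, b = u ++ b'.drop (k - m + 1) ∧ u.length ≤ k - m + 1 ∧ u.getLast? ≠ b'[k - m]? := by
  have hJ := filter_drop_mem_pathSet_eq_Icc hb' htop
  rw [hcard] at hJ
  have hin : b'.drop (k - m + 1) ∈ pathSet b k := by
    have : k - m + 1 ∈ Icc (k + 1 - m) k := mem_Icc.mpr ⟨by omega, by omega⟩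
    rw [← hJ, mem_filter] at this
    exact this.2
  have hout : b'.drop (k - m) ∉ pathSet b k := by
    intro h
    have : k - m ∈ Icc (k + 1 - m) k := by
      rw [← hJ]
      exact mem_filter.mpr ⟨mem_range.mpr (by omega), h⟩
    have := (mem_Icc.mp this).1
    omega
  obtain ⟨i, hik, hi⟩ := mem_pathSet.mp hin
  obtain ⟨i', hi'k, hi'⟩ := mem_pathSet.mp htop
  have h1 := congrArg List.length hi
  have h2 := congrArg List.length hi'
  simp only [List.length_drop] at h1 h2
  refine ⟨b.take i, by rw [← hi, List.take_append_drop], by rw [List.length_take]; omega, ?_⟩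
  rw [List.getLast?_take, List.getElem?_eq_getElem (by omega : k - m < b'.length)]
  split_ifs with hi0
  · exact (Option.some_ne_none _).symm
  · rw [List.getElem?_eq_getElem (by omega : i - 1 < b.length), Option.some_or]
    intro h
    apply hout
    refine mem_pathSet.mpr ⟨i - 1, by omega, ?_⟩
    rw [List.drop_eq_getElem_cons (l := b) (i := i - 1) (by omega),
      List.drop_eq_getElem_cons (l := b') (i := k - m) (by omega),
      Nat.sub_add_cancel (by omega), hi, Option.some.inj h]

theorem card_filter_pathSet_inter_eq_le {n k m : ℕ} {b' : List (Fin N)} (hb' : k ≤ b'.length)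
    (hm1 : 1 ≤ m) (hmk : m ≤ k) :
    #{b ∈ pathBottoms N n k | #(pathSet b k ∩ pathSet b' k) = m ∧ b'.drop k ∈ pathSet b k}
      ≤ N ^ (k - m + 1) := by
  obtain ⟨c, hc⟩ : ∃ c, b'[k - m]? = some c := ⟨_, List.getElem?_eq_getElem (by omega)⟩
  set w := b'.drop (k - m + 1)
  set pad : List (Fin N) → List (Fin N) := fun u => u ++ List.replicate (k - m + 1 - u.length) c
  have hsplit : ∀ b ∈ {b ∈ pathBottoms N n k |
      #(pathSet b k ∩ pathSet b' k) = m ∧ b'.drop k ∈ pathSet b k},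
      ∃ u, b = u ++ w ∧ u.length ≤ k - m + 1 ∧ u.getLast? ≠ some c := by
    intro b hb
    obtain ⟨hbB, hcard, htop⟩ := mem_filter.mp hb
    rw [← hc]
    exact exists_eq_append_drop_of_card_inter_eq (mem_pathBottoms.mp hbB).1 hb' hm1 hmk hcard htop
  rw [← card_listsLen N (k - m + 1)]
  refine card_le_card_of_injOn (fun b => pad (b.take (b.length - w.length))) ?_ ?_
  · intro b hb
    obtain ⟨u, rfl, hlen, -⟩ := hsplit b hb
    rw [mem_coe, mem_listsLen]
    simp only [pad, List.length_append, Nat.add_sub_cancel, List.take_left, List.length_replicate]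
    omega
  · intro b₁ hb₁ b₂ hb₂ h
    obtain ⟨u₁, rfl, -, hu₁⟩ := hsplit b₁ hb₁
    obtain ⟨u₂, rfl, -, hu₂⟩ := hsplit b₂ hb₂
    simp only [List.length_append, Nat.add_sub_cancel, List.take_left] at h
    have := congrArg (List.rdropWhile (· == c)) h
    rw [List.rdropWhile_append_replicate hu₁, List.rdropWhile_append_replicate hu₂] at this
    rw [this]

end Tree

theorem stmt9_general (N n k : ℕ) (m : ℕ) (hm1 : 1 ≤ m) (hmk : m ≤ k) :
    (((pathBottoms N n k) ×ˢ (pathBottoms N n k)).filter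
        (fun q => (pathSet q.1 k ∩ pathSet q.2 k).card = m)).card
      ≤ 2 * (pathBottoms N n k).card * N ^ (k - m + 1) := by
  set B := pathBottoms N n k
  let R : List (Fin N) → List (Fin N) → Prop := fun b b' =>
    #(pathSet b k ∩ pathSet b' k) = m ∧ b'.drop k ∈ pathSet b k
  have hfiber : ∀ b' ∈ B, #{b ∈ B | R b b'} ≤ N ^ (k - m + 1) := fun b' hb' =>
    card_filter_pathSet_inter_eq_le (mem_pathBottoms.mp hb').1 hm1 hmk
  have hsplit : {q ∈ B ×ˢ B | #(pathSet q.1 k ∩ pathSet q.2 k) = m} ⊆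
      {q ∈ B ×ˢ B | R q.1 q.2} ∪ {q ∈ B ×ˢ B | R q.2 q.1} := by
    rw [← filter_or]
    refine monotone_filter_right _ fun q _ hq => ?_
    have hne : (pathSet q.1 k ∩ pathSet q.2 k).Nonempty := card_pos.mp (by omega)
    rcases drop_mem_pathSet_or_drop_mem_pathSet hne with h | h
    · exact Or.inl ⟨hq, h⟩
    · exact Or.inr ⟨by rwa [inter_comm], h⟩
  calc _ ≤ #{q ∈ B ×ˢ B | R q.1 q.2} + #{q ∈ B ×ˢ B | R q.2 q.1} :=
        (card_le_card hsplit).trans (card_union_le _ _)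
    _ ≤ #B * N ^ (k - m + 1) + #B * N ^ (k - m + 1) :=
        add_le_add (card_filter_product_le_of_snd hfiber) (card_filter_product_le_of_fst hfiber)
    _ = 2 * #B * N ^ (k - m + 1) := by ring

/-- `a m`, the number of ordered pairs of downward paths of length `k` in the depth-`n`
tree sharing exactly `m` vertices, satisfies `a m ≤ 2 M N^{k-m+1}` for `1 ≤ m ≤ k`, where
`M` is the total number of downward paths of length `k`. -/
theorem stmt9 (N n k : ℕ) (hN : 2 ≤ N) (hk : k ≤ n) (m : ℕ) (hm1 : 1 ≤ m) (hmk : m ≤ k) :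
    (((pathBottoms N n k) ×ˢ (pathBottoms N n k)).filter
        (fun q => (pathSet q.1 k ∩ pathSet q.2 k).card = m)).card
      ≤ 2 * (pathBottoms N n k).card * N ^ (k - m + 1) :=
  stmt9_general N n k m hm1 hmk
end
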